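/- Let ε(X) = α₀X + α₁ with α₀ > 0, α₁ > 0. Fix h₁ > 0 and X₁ > 0 with ε(X₁)h₁ = Y_opt. Then for every X ∈ (X₁, α₁P(Y_opt)/(α₀ R Y_opt)), one has Π(X, h₁) > Π(X₁, h₁), where Π(X,h) = (X/ε(X))P(ε(X)h). -/

import Mathlib

/-!
Past the optimum `Y_opt` the integrand of `P` is still `> -R`, because the growth rate is
positive, so `P(Y) ≥ P(Y_opt) - R (Y - Y_opt)`. Raising `X` above `X₁` moves `ε(X) h₁` past
`Y_opt` by `α₀ (X - X₁) h₁`; with this linear lower bound, `Π(X, h₁) > Π(X₁, h₁)` reduces,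
after clearing denominators, to `α₁ (X - X₁) P(Y_opt) > α₀ R Y_opt X (X - X₁)`, which is the
upper bound on `X`.
-/

open Real Set intervalIntegral

/-- Haldane growth rate. -/
noncomputable def haldane (μmax θ Istar I : ℝ) : ℝ :=
  μmax * I / (I + (μmax / θ) * (I / Istar - 1) ^ 2)

/-- Optical depth productivity P(Y) = ∫₀^Y (μ(I_s e^{−y}) − R) dy. -/
noncomputable def opticalP (μmax θ Istar Is R Y : ℝ) : ℝ :=
  ∫ y in (0 : ℝ)..Y, (haldane μmax θ Istar (Is * Real.exp (-y)) - R)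

/-- Surface productivity Π(X,h) = (X/ε(X))·P(ε(X)h) for ε(X) = α₀X + α₁. -/
noncomputable def surfProd (μmax θ Istar Is R α₀ α₁ X h : ℝ) : ℝ :=
  (X / (α₀ * X + α₁)) * opticalP μmax θ Istar Is R ((α₀ * X + α₁) * h)

lemma haldane_pos {μmax θ Istar I : ℝ} (hμ : 0 < μmax) (hθ : 0 < θ) (hI : 0 < I) :
    0 < haldane μmax θ Istar I := by
  have := div_pos hμ hθ
  unfold haldane
  positivity

lemma continuous_haldane_exp {μmax θ Istar Is : ℝ} (hμ : 0 < μmax) (hθ : 0 < θ)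
    (hIs : 0 < Is) : Continuous fun y => haldane μmax θ Istar (Is * exp (-y)) := by
  have := div_pos hμ hθ
  unfold haldane
  exact Continuous.div (by fun_prop) (by fun_prop) fun y => by positivity

lemma integral_sub_const_sub_mul_le {f : ℝ → ℝ} (hf : Continuous f) (hf0 : ∀ y, 0 ≤ f y)
    {a b c R : ℝ} (hab : a ≤ b) :
    (∫ y in c..a, (f y - R)) - R * (b - a) ≤ ∫ y in c..b, (f y - R) := by
  have hg : Continuous fun y => f y - R := hf.sub continuous_const
  have htail : ∫ y in a..b, (-R) ≤ ∫ y in a..b, (f y - R) :=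
    integral_mono_on hab intervalIntegrable_const (hg.intervalIntegrable _ _)
      fun y _ => by linarith [hf0 y]
  rw [← integral_add_adjacent_intervals (hg.intervalIntegrable c a) (hg.intervalIntegrable a b)]
  simp only [integral_const, smul_eq_mul] at htail
  linarith

lemma opticalP_sub_mul_le {μmax θ Istar Is R Y₀ Y : ℝ} (hμ : 0 < μmax) (hθ : 0 < θ)
    (hIs : 0 < Is) (hY : Y₀ ≤ Y) :
    opticalP μmax θ Istar Is R Y₀ - R * (Y - Y₀) ≤ opticalP μmax θ Istar Is R Y :=
  integral_sub_const_sub_mul_le (continuous_haldane_exp hμ hθ hIs)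
    (fun y => (haldane_pos hμ hθ (by positivity)).le) hY

lemma div_mul_lt_div_mul_sub_mul {α₀ α₁ X₁ X h R P : ℝ} (hα₀ : 0 < α₀) (hα₁ : 0 < α₁)
    (hX₁ : 0 < X₁) (hX : X₁ < X)
    (hXP : X * (α₀ * R * ((α₀ * X₁ + α₁) * h)) < α₁ * P) :
    X₁ / (α₀ * X₁ + α₁) * P <
      X / (α₀ * X + α₁) * (P - R * ((α₀ * X + α₁) * h - (α₀ * X₁ + α₁) * h)) := by
  have hε₁ : 0 < α₀ * X₁ + α₁ := by positivity
  have hε : 0 < α₀ * X + α₁ := by nlinarith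
  rw [div_mul_eq_mul_div, div_mul_eq_mul_div, div_lt_div_iff₀ hε₁ hε]
  -- `X ε(X₁) - X₁ ε(X) = α₁ (X - X₁)`
  nlinarith [mul_pos (sub_pos.mpr hX) (sub_pos.mpr hXP)]

theorem stmt10_general (μmax θ Istar Is R α₀ α₁ Yopt X₁ h₁ : ℝ)
    (hμ : 0 < μmax) (hθ : 0 < θ) (hIs : 0 < Is)
    (hR0 : 0 < R)
    (hα₀ : 0 < α₀) (hα₁ : 0 < α₁)
    (hX₁ : 0 < X₁) (hh₁ : 0 < h₁)
    (hopt : (α₀ * X₁ + α₁) * h₁ = Yopt) :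
    ∀ X : ℝ, X₁ < X → X < α₁ * opticalP μmax θ Istar Is R Yopt / (α₀ * R * Yopt) →
      surfProd μmax θ Istar Is R α₀ α₁ X₁ h₁ < surfProd μmax θ Istar Is R α₀ α₁ X h₁ := by
  intro X hX hXP
  subst hopt
  have hXP' := (lt_div_iff₀ (by positivity)).1 hXP
  have hX0 : 0 < X := hX₁.trans hX
  have hY : (α₀ * X₁ + α₁) * h₁ ≤ (α₀ * X + α₁) * h₁ := by gcongr
  unfold surfProd
  calc _ < X / (α₀ * X + α₁) * (opticalP μmax θ Istar Is R ((α₀ * X₁ + α₁) * h₁) -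
          R * ((α₀ * X + α₁) * h₁ - (α₀ * X₁ + α₁) * h₁)) :=
        div_mul_lt_div_mul_sub_mul hα₀ hα₁ hX₁ hX hXP'
    _ ≤ _ := by
        gcongr
        exact opticalP_sub_mul_le hμ hθ hIs hY

theorem stmt10 (μmax θ Istar Is R α₀ α₁ Yopt X₁ h₁ : ℝ)
    (hμ : 0 < μmax) (hθ : 0 < θ) (hI : 0 < Istar) (hIs : 0 < Is)
    (hR0 : 0 < R) (hR : R < μmax) (hsurf : R < haldane μmax θ Istar Is)
    (hα₀ : 0 < α₀) (hα₁ : 0 < α₁)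
    (hYopt : 0 < Yopt)
    (heqμ : haldane μmax θ Istar (Is * Real.exp (-Yopt)) = R)
    (hPpos : 0 < opticalP μmax θ Istar Is R Yopt)
    (hmax : ∀ Y ≥ 0, opticalP μmax θ Istar Is R Y ≤ opticalP μmax θ Istar Is R Yopt)
    (hX₁ : 0 < X₁) (hh₁ : 0 < h₁)
    (hopt : (α₀ * X₁ + α₁) * h₁ = Yopt) :
    ∀ X : ℝ, X₁ < X → X < α₁ * opticalP μmax θ Istar Is R Yopt / (α₀ * R * Yopt) →
      surfProd μmax θ Istar Is R α₀ α₁ X₁ h₁ < surfProd μmax θ Istar Is R α₀ α₁ X h₁ :=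
  stmt10_general μmax θ Istar Is R α₀ α₁ Yopt X₁ h₁ hμ hθ hIs hR0 hα₀ hα₁ hX₁ hh₁ hopt
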